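/- arXiv:1405.0680 — 3 statements merged into one kernel-verified Lean document; each statement's English description precedes it below -/
import Mathlib

section
/- Let Σ, Σ̂ ∈ ℝ^{p×p} be symmetric matrices with eigenvalues λ₁ ≥ … ≥ λ_p and λ̂₁ ≥ … ≥ λ̂_p respectively, fix 1 ≤ r ≤ s ≤ p with d := s − r + 1, and assume δ := min(λ_{r−1} − λ_r, λ_s − λ_{s+1}) > 0 (with λ₀ := ∞, λ_{p+1} := −∞). Let V = (v_r, …, v_s) ∈ ℝ^{p×d} and V̂ = (v̂_r, …, v̂_s) ∈ ℝ^{p×d} have orthonormal columns satisfying Σv_j = λ_j v_j and Σ̂v̂_j = λ̂_j v̂_j for j = r, …, s. Then ‖sin Θ(V̂, V)‖_F ≤ 2 ‖Σ̂ − Σ‖_F / δ. -/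
open Matrix

noncomputable def frobNorm {m n : Type*} [Fintype m] [Fintype n] (A : Matrix m n ℝ) : ℝ :=
  Real.sqrt (∑ i, ∑ j, (A i j) ^ 2)

noncomputable def opNorm {p q : ℕ} (A : Matrix (Fin p) (Fin q) ℝ) : ℝ :=
  ‖LinearMap.toContinuousLinearMap (Matrix.toEuclideanLin A)‖

/-!
Extend the columns of `V` and `V̂` to orthonormal eigenbases `B` and `W` of `Σ` and `Σ̂` (the given
spectral decompositions fix every multiplicity, so this is possible). For `X = Wᵀ B`,
`‖Σ̂ - Σ‖_F² = ∑ (λ̂_α - λ_β)² X_{αβ}²`, the matrix `M = X ⊙ X` is doubly stochastic, and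
`d - ‖V̂ᵀ V‖_F²` is the mass of `M` on `Iᶜ × I`, where `I = {r, …, s}`.

Let `H` and `L` be the indices before and after `I`, and `U` (resp. `D`) the rows with
`λ̂_α ≥ λ_r + δ/2` (resp. `λ̂_α ≤ λ_s - δ/2`). On `(U ∪ D) × I`, `Uᶜ × H` and `Dᶜ × L` we have
`|λ̂_α - λ_β| ≥ δ/2`. Since `λ̂` is monotone, `U` and `H` are nested, and so are `D` and `L`;
the row and column sums of `M` then show that these three blocks carry at least the mass of
`Iᶜ × I`.
-/

namespace Matrix

section BlockSum

variable {ι : Type*}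

def blockSum (M : Matrix ι ι ℝ) (A B : Finset ι) : ℝ :=
  ∑ α ∈ A, ∑ β ∈ B, M α β

lemma blockSum_nonneg {M : Matrix ι ι ℝ} (hM : ∀ α β, 0 ≤ M α β) (A B : Finset ι) :
    0 ≤ blockSum M A B :=
  Finset.sum_nonneg fun α _ => Finset.sum_nonneg fun β _ => hM α β

lemma blockSum_mono {M : Matrix ι ι ℝ} (hM : ∀ α β, 0 ≤ M α β) {A A' B B' : Finset ι}
    (hA : A ⊆ A') (hB : B ⊆ B') : blockSum M A B ≤ blockSum M A' B' :=
  (Finset.sum_le_sum fun α _ => Finset.sum_le_sum_of_subset_of_nonneg hB fun β _ _ => hM α β).trans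
    (Finset.sum_le_sum_of_subset_of_nonneg hA fun α _ _ =>
      Finset.sum_nonneg fun β _ => hM α β)

lemma blockSum_union_left [DecidableEq ι] (M : Matrix ι ι ℝ) {A A' : Finset ι} (h : Disjoint A A')
    (B : Finset ι) : blockSum M (A ∪ A') B = blockSum M A B + blockSum M A' B :=
  Finset.sum_union h

lemma blockSum_union_right [DecidableEq ι] (M : Matrix ι ι ℝ) (A : Finset ι) {B B' : Finset ι}
    (h : Disjoint B B') : blockSum M A (B ∪ B') = blockSum M A B + blockSum M A B' := by
  simp only [blockSum, Finset.sum_union h, Finset.sum_add_distrib]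

lemma mul_blockSum_le {M N : Matrix ι ι ℝ} {c : ℝ} {A B : Finset ι}
    (h : ∀ α ∈ A, ∀ β ∈ B, c * M α β ≤ N α β) : c * blockSum M A B ≤ blockSum N A B := by
  simp only [blockSum, Finset.mul_sum]
  exact Finset.sum_le_sum fun α hα => Finset.sum_le_sum fun β hβ => h α hα β hβ

variable [Fintype ι] [DecidableEq ι] {M : Matrix ι ι ℝ}

lemma blockSum_univ_right (hM : M ∈ doublyStochastic ℝ ι) (A : Finset ι) :
    blockSum M A Finset.univ = A.card := by
  simp [blockSum, ((mem_doublyStochastic_iff_sum).1 hM).2.1]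

lemma blockSum_univ_left (hM : M ∈ doublyStochastic ℝ ι) (B : Finset ι) :
    blockSum M Finset.univ B = B.card := by
  refine Finset.sum_comm.trans ?_
  simp [((mem_doublyStochastic_iff_sum).1 hM).2.2]

lemma blockSum_compl_left (hM : M ∈ doublyStochastic ℝ ι) (B : Finset ι) :
    blockSum M Bᶜ B = B.card - blockSum M B B := by
  rw [← blockSum_univ_left hM B, ← Finset.union_compl B, blockSum_union_left M disjoint_compl_right,
    add_sub_cancel_left]

lemma blockSum_compl_comm (hM : M ∈ doublyStochastic ℝ ι) (A : Finset ι) :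
    blockSum M A Aᶜ = blockSum M Aᶜ A := by
  have h := blockSum_univ_right hM A
  rw [← Finset.union_compl A, blockSum_union_right M A disjoint_compl_right] at h
  rw [blockSum_compl_left hM]
  linarith

lemma blockSum_le_add_of_subset_or_subset (hM : M ∈ doublyStochastic ℝ ι) {H I U : Finset ι}
    (hHI : Disjoint H I) (hU : H ⊆ U ∨ U ⊆ H) :
    blockSum M H I ≤ blockSum M U I + blockSum M Uᶜ H := by
  have h0 := (mem_doublyStochastic.1 hM).1
  rcases hU with hHU | hUH
  · exact le_add_of_le_of_nonneg (blockSum_mono h0 hHU le_rfl) (blockSum_nonneg h0 _ _)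
  · calc blockSum M H I ≤ blockSum M H Hᶜ :=
          blockSum_mono h0 le_rfl (Finset.subset_compl_iff_disjoint_left.2 hHI)
      _ = blockSum M Hᶜ H := blockSum_compl_comm hM H
      _ ≤ blockSum M Uᶜ H := blockSum_mono h0 (Finset.compl_subset_compl.2 hUH) le_rfl
      _ ≤ _ := le_add_of_nonneg_left (blockSum_nonneg h0 _ _)

lemma blockSum_add_add_add_le (hM : ∀ α β, 0 ≤ M α β) {U D H L : Finset ι} (hUD : Disjoint U D)
    (hHL : Disjoint H L) :
    blockSum M U (H ∪ L)ᶜ + blockSum M D (H ∪ L)ᶜ + blockSum M Uᶜ H + blockSum M Dᶜ L ≤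
      blockSum M Finset.univ Finset.univ := by
  have hsplit : blockSum M Finset.univ Finset.univ = blockSum M Finset.univ (H ∪ L)ᶜ +
      blockSum M Finset.univ H + blockSum M Finset.univ L := by
    rw [add_assoc, ← blockSum_union_right M _ hHL, add_comm,
      ← blockSum_union_right M _ disjoint_compl_right, Finset.union_compl]
  rw [hsplit, ← blockSum_union_left M hUD]
  gcongr <;> exact blockSum_mono hM (Finset.subset_univ _) le_rfl

theorem sq_mul_blockSum_le [LinearOrder ι] (hM : M ∈ doublyStochastic ℝ ι) {a b : ι → ℝ}
    (ha : Antitone a) {H L : Finset ι} (hH : IsLowerSet (H : Set ι)) (hL : IsUpperSet (L : Set ι))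
    (hHL : Disjoint H L) {t lr ls : ℝ} (ht : 0 < t) (hls : ls ≤ lr)
    (hbH : ∀ β ∈ H, lr + 2 * t ≤ b β) (hbI : ∀ β ∈ (H ∪ L)ᶜ, ls ≤ b β ∧ b β ≤ lr)
    (hbL : ∀ β ∈ L, b β ≤ ls - 2 * t) :
    t ^ 2 * blockSum M (H ∪ L) (H ∪ L)ᶜ ≤ ∑ α, ∑ β, (a α - b β) ^ 2 * M α β := by
  set I := (H ∪ L)ᶜ
  set U := Finset.univ.filter fun α => lr + t ≤ a α
  set D := Finset.univ.filter fun α => a α ≤ ls - t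
  have h0 := (mem_doublyStochastic.1 hM).1
  have hHU : H ⊆ U ∨ U ⊆ H := by
    simpa only [Finset.coe_subset] using
      hH.total (s := (H : Set ι)) (t := U) fun x y hyx hx => by
        simp only [U, Finset.coe_filter, Finset.mem_univ, true_and, Set.mem_ofPred_eq] at hx ⊢
        exact hx.trans (ha hyx)
  have hLD : L ⊆ D ∨ D ⊆ L := by
    simpa only [Finset.coe_subset] using
      hL.total (s := (L : Set ι)) (t := D) fun x y hxy hx => by
        simp only [D, Finset.coe_filter, Finset.mem_univ, true_and, Set.mem_ofPred_eq] at hx ⊢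
        exact (ha hxy).trans hx
  set C : Matrix ι ι ℝ := of fun α β => (a α - b β) ^ 2 * M α β
  have mass_le_cost : ∀ {A B : Finset ι}, (∀ α ∈ A, ∀ β ∈ B, t ≤ |a α - b β|) →
      t ^ 2 * blockSum M A B ≤ blockSum C A B := fun h =>
    mul_blockSum_le fun α hα β hβ => mul_le_mul_of_nonneg_right
      (by simpa only [sq_abs] using pow_le_pow_left₀ ht.le (h α hα β hβ) 2) (h0 α β)
  have hUI := mass_le_cost (A := U) (B := I) fun α hα β hβ => le_abs.2 <| Or.inl <| by
    have := (Finset.mem_filter.1 hα).2; linarith [(hbI β hβ).2]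
  have hDI := mass_le_cost (A := D) (B := I) fun α hα β hβ => le_abs.2 <| Or.inr <| by
    have := (Finset.mem_filter.1 hα).2; linarith [(hbI β hβ).1]
  have hUH := mass_le_cost (A := Uᶜ) (B := H) fun α hα β hβ => le_abs.2 <| Or.inr <| by
    have : ¬lr + t ≤ a α := by simpa [U] using hα
    linarith [hbH β hβ]
  have hDL := mass_le_cost (A := Dᶜ) (B := L) fun α hα β hβ => le_abs.2 <| Or.inl <| by
    have : ¬a α ≤ ls - t := by simpa [D] using hα
    linarith [hbL β hβ]
  calc t ^ 2 * blockSum M (H ∪ L) I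
      ≤ t ^ 2 * ((blockSum M U I + blockSum M Uᶜ H) + (blockSum M D I + blockSum M Dᶜ L)) := by
        rw [blockSum_union_left M hHL]
        gcongr
        · exact blockSum_le_add_of_subset_or_subset hM
            (disjoint_compl_right.mono_right (compl_le_compl le_sup_left)) hHU
        · exact blockSum_le_add_of_subset_or_subset hM
            (disjoint_compl_right.mono_right (compl_le_compl le_sup_right)) hLD
    _ ≤ blockSum C U I + blockSum C D I + blockSum C Uᶜ H + blockSum C Dᶜ L := by linarith
    _ ≤ blockSum C Finset.univ Finset.univ := blockSum_add_add_add_le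
        (fun α β => mul_nonneg (sq_nonneg _) (h0 α β))
        (Finset.disjoint_filter.2 fun α _ hU hD => by linarith) hHL

end BlockSum

section Eigenbasis

variable {n : Type*} [Fintype n]

lemma dotProduct_eq_zero_of_mulVec_eq_smul {S : Matrix n n ℝ} (hS : S.IsSymm) {x y : n → ℝ}
    {a b : ℝ} (hx : S *ᵥ x = a • x) (hy : S *ᵥ y = b • y) (hab : a ≠ b) : x ⬝ᵥ y = 0 := by
  have h : (S *ᵥ x) ⬝ᵥ y = x ⬝ᵥ (S *ᵥ y) := by
    rw [dotProduct_mulVec, ← mulVec_transpose, hS.eq]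
  rw [hx, hy, smul_dotProduct, dotProduct_smul, smul_eq_mul, smul_eq_mul] at h
  exact (mul_eq_zero.1 (by linarith : (a - b) * (x ⬝ᵥ y) = 0)).resolve_left (sub_ne_zero.2 hab)

lemma dotProduct_self_inv_sqrt_smul {v : n → ℝ} (hv : v ≠ 0) :
    ((√(v ⬝ᵥ v))⁻¹ • v) ⬝ᵥ ((√(v ⬝ᵥ v))⁻¹ • v) = 1 := by
  have hpos : 0 < v ⬝ᵥ v := by
    refine lt_of_le_of_ne (Finset.sum_nonneg fun i _ => mul_self_nonneg (v i)) ?_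
    exact fun h => hv (dotProduct_self_eq_zero.1 h.symm)
  rw [smul_dotProduct, dotProduct_smul, smul_smul, smul_eq_mul, ← mul_inv,
    Real.mul_self_sqrt hpos.le, inv_mul_cancel₀ hpos.ne']

variable [DecidableEq n]

lemma exists_eigenvector_orthogonal {Q : Matrix n n ℝ} (hQ : Qᵀ * Q = 1) (lam : n → ℝ) (μ : ℝ)
    (T : Finset n) (u : n → n → ℝ) (hT : T.card < (Finset.univ.filter (lam · = μ)).card) :
    ∃ w, (Q * diagonal lam * Qᵀ) *ᵥ w = μ • w ∧ w ⬝ᵥ w = 1 ∧ ∀ γ ∈ T, u γ ⬝ᵥ w = 0 := by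
  -- `A *ᵥ c = 0` says that `c` vanishes off `{β | lam β = μ}` and that `Q *ᵥ c ⟂ u γ` for
  -- `γ ∈ T`: fewer equations than unknowns.
  let A : Matrix (T ⊕ {β // lam β ≠ μ}) n ℝ :=
    of (Sum.elim (fun γ => u γ ᵥ* Q) (fun β => Pi.single β.1 1))
  have hcard : Module.finrank ℝ (T ⊕ {β // lam β ≠ μ} → ℝ) < Module.finrank ℝ (n → ℝ) := by
    rw [Module.finrank_fintype_fun_eq_card, Module.finrank_fintype_fun_eq_card, Fintype.card_sum,
      Fintype.card_coe, Fintype.card_subtype_compl, Fintype.card_subtype]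
    have := Finset.card_le_univ (Finset.univ.filter (lam · = μ))
    omega
  obtain ⟨c₀, hc₀, hc₀0⟩ := Submodule.ne_bot_iff _ |>.1 (LinearMap.ker_ne_bot_of_finrank_lt hcard
    (f := A.mulVecLin))
  set c := (√(c₀ ⬝ᵥ c₀))⁻¹ • c₀
  have hc : A *ᵥ c = 0 := by
    rw [mulVec_smul, show A *ᵥ c₀ = 0 from hc₀, smul_zero]
  have hcu : ∀ γ ∈ T, u γ ⬝ᵥ Q *ᵥ c = 0 := fun γ hγ => by
    simpa [A, mulVec, dotProduct_mulVec] using congrFun hc (Sum.inl ⟨γ, hγ⟩)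
  have hc_diag : diagonal lam *ᵥ c = μ • c := by
    funext β
    rw [mulVec_diagonal, Pi.smul_apply, smul_eq_mul]
    by_cases hβ : lam β = μ
    · rw [hβ]
    · simpa [A, mulVec, hβ] using congrFun hc (Sum.inr ⟨β, hβ⟩)
  refine ⟨Q *ᵥ c, ?_, ?_, hcu⟩
  · rw [← mulVec_mulVec, ← mulVec_mulVec, mulVec_mulVec _ Qᵀ, hQ, one_mulVec, hc_diag,
      mulVec_smul]
  · rw [dotProduct_mulVec, ← mulVec_transpose, mulVec_mulVec, hQ, one_mulVec]
    exact dotProduct_self_inv_sqrt_smul hc₀0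

lemma exists_eigenfamily_extending {Q : Matrix n n ℝ} (hQ : Qᵀ * Q = 1) (lam : n → ℝ)
    (U : Finset n) (f : n → n → ℝ)
    (hf : ∀ β ∈ Uᶜ, (Q * diagonal lam * Qᵀ) *ᵥ f β = lam β • f β)
    (hfo : ∀ β ∈ Uᶜ, ∀ γ ∈ Uᶜ, f β ⬝ᵥ f γ = (1 : Matrix n n ℝ) β γ) :
    ∃ g : n → n → ℝ, (∀ β, (Q * diagonal lam * Qᵀ) *ᵥ g β = lam β • g β) ∧
      (∀ β γ, g β ⬝ᵥ g γ = (1 : Matrix n n ℝ) β γ) ∧ ∀ β ∈ Uᶜ, g β = f β := by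
  set S := Q * diagonal lam * Qᵀ
  have hS : S.IsSymm := by simp [S, IsSymm, transpose_mul, Matrix.mul_assoc]
  induction U using Finset.induction_on generalizing f with
  | empty => exact ⟨f, fun β => hf β (by simp), fun β γ => hfo β (by simp) γ (by simp),
      fun _ _ => rfl⟩
  | insert β₀ U hβ₀ ih =>
    have hT : (Finset.filter (lam · = lam β₀) (insert β₀ U)ᶜ).card <
        (Finset.univ.filter (lam · = lam β₀)).card := by
      refine Finset.card_lt_card ⟨Finset.filter_subset_filter _ (Finset.subset_univ _), ?_⟩
      intro h
      simpa using h (Finset.mem_filter.2 ⟨Finset.mem_univ β₀, rfl⟩)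
    obtain ⟨w, hw, hww, hwf⟩ := exists_eigenvector_orthogonal hQ lam (lam β₀) _ f hT
    have hwf' : ∀ γ ∈ (insert β₀ U)ᶜ, f γ ⬝ᵥ w = 0 := fun γ hγ => by
      by_cases hγβ : lam γ = lam β₀
      · exact hwf γ (Finset.mem_filter.2 ⟨hγ, hγβ⟩)
      · exact dotProduct_eq_zero_of_mulVec_eq_smul hS (hf γ hγ) hw hγβ
    have hmem : ∀ γ ∈ Uᶜ, γ ≠ β₀ → γ ∈ (insert β₀ U)ᶜ := fun γ hγ hne => by
      simp_all
    obtain ⟨g, hg, hgo, hgf⟩ := ih (Function.update f β₀ w)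
      (fun β hβ γ hγ => by
        by_cases hb : β = β₀ <;> by_cases hc : γ = β₀
        · subst hb hc; simpa using hww
        · subst hb
          simpa [hc, Ne.symm hc, one_apply_ne, dotProduct_comm] using hwf' γ (hmem γ hγ hc)
        · subst hc; simpa [hb, one_apply_ne hb] using hwf' β (hmem β hβ hb)
        · simpa [hb, hc] using hfo β (hmem β hβ hb) γ (hmem γ hγ hc))
      (fun β hβ => by
        by_cases hb : β = β₀
        · subst hb; simpa using hw
        · simpa [hb] using hf β (hmem β hβ hb))
    refine ⟨g, hg, hgo, fun β hβ => ?_⟩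
    have hne : β ≠ β₀ := by rintro rfl; simp at hβ
    rw [hgf β (by simp_all), Function.update_of_ne hne]

lemma exists_spectral_decomposition_extending {κ : Type*} [Fintype κ] [DecidableEq κ]
    {S : Matrix n n ℝ} {lam : n → ℝ}
    (hS : ∃ Q : Matrix n n ℝ, Qᵀ * Q = 1 ∧ S = Q * diagonal lam * Qᵀ)
    {V : Matrix n κ ℝ} (hV : Vᵀ * V = 1) (e : κ ↪ n)
    (hVeig : ∀ j, S *ᵥ (fun i => V i j) = lam (e j) • fun i => V i j) :
    ∃ B : Matrix n n ℝ, Bᵀ * B = 1 ∧ S = B * diagonal lam * Bᵀ ∧ B.submatrix id e = V := by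
  obtain ⟨Q, hQ, hSQ⟩ := hS
  set f : n → n → ℝ := Function.extend e (fun j i => V i j) 0
  have hf : ∀ j, f (e j) = fun i => V i j := e.injective.extend_apply _ _
  obtain ⟨g, hg, hgo, hgf⟩ := exists_eigenfamily_extending hQ lam (Finset.univ.map e)ᶜ f
    (by simpa [hf, hSQ] using hVeig)
    (by
      simp only [compl_compl, Finset.mem_map, Finset.mem_univ, true_and, forall_exists_index,
        forall_apply_eq_imp_iff, hf]
      intro j j'
      simpa [mul_apply, one_apply, e.injective.eq_iff, dotProduct] using
        congrFun (congrFun hV j) j')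
  rw [← hSQ] at hg
  have hgB : of g * (of g)ᵀ = 1 := by
    ext β γ
    simpa [mul_apply, dotProduct] using hgo β γ
  have hSB : S * (of g)ᵀ = (of g)ᵀ * diagonal lam := by
    ext i β
    rw [mul_diagonal]
    exact (congrFun (hg β) i).trans (mul_comm _ _)
  refine ⟨(of g)ᵀ, by simpa using hgB, ?_, ?_⟩
  · rw [transpose_transpose, ← hSB, Matrix.mul_assoc, mul_eq_one_comm.1 hgB, Matrix.mul_one]
  · ext i j
    simp [hgf (e j) (by simp), hf]

lemma hadamard_self_mem_doublyStochastic {X : Matrix n n ℝ} (hX : Xᵀ * X = 1) :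
    X ⊙ X ∈ doublyStochastic ℝ n := by
  refine mem_doublyStochastic_iff_sum.2 ⟨fun i j => mul_self_nonneg _, fun i => ?_, fun j => ?_⟩
  · simpa [mul_apply] using congrFun (congrFun (mul_eq_one_comm.1 hX : X * Xᵀ = 1) i) i
  · simpa [mul_apply] using congrFun (congrFun hX j) j

end Eigenbasis

end Matrix

section Frobenius

lemma frobNorm_sq {m k : Type*} [Fintype m] [Fintype k] (A : Matrix m k ℝ) :
    frobNorm A ^ 2 = ∑ i, ∑ j, A i j ^ 2 :=
  Real.sq_sqrt (Finset.sum_nonneg fun _ _ => Finset.sum_nonneg fun _ _ => sq_nonneg _)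

variable {n : Type*} [Fintype n]

lemma frobNorm_sq_eq_trace (M : Matrix n n ℝ) : frobNorm M ^ 2 = trace (M * Mᵀ) := by
  rw [frobNorm_sq]
  simp [trace, mul_apply, sq]

variable [DecidableEq n]

lemma frobNorm_transpose_mul_mul {W B : Matrix n n ℝ} (hW : Wᵀ * W = 1) (hB : Bᵀ * B = 1)
    (E : Matrix n n ℝ) : frobNorm (Wᵀ * E * B) = frobNorm E := by
  have h : (Wᵀ * E * B) * (Wᵀ * E * B)ᵀ = Wᵀ * (E * (B * Bᵀ) * Eᵀ) * W := by
    simp only [transpose_mul, transpose_transpose, Matrix.mul_assoc]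
  have hsq : frobNorm (Wᵀ * E * B) ^ 2 = frobNorm E ^ 2 := by
    rw [frobNorm_sq_eq_trace, frobNorm_sq_eq_trace, h, mul_eq_one_comm.1 hB, Matrix.mul_one,
      trace_mul_comm, ← Matrix.mul_assoc, mul_eq_one_comm.1 hW, Matrix.one_mul]
  exact (sq_eq_sq₀ (Real.sqrt_nonneg _) (Real.sqrt_nonneg _)).1 hsq

lemma frobNorm_sub_sq {W B : Matrix n n ℝ} (hW : Wᵀ * W = 1) (hB : Bᵀ * B = 1) (a b : n → ℝ) :
    frobNorm (W * diagonal a * Wᵀ - B * diagonal b * Bᵀ) ^ 2 =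
      ∑ α, ∑ β, (a α - b β) ^ 2 * ((Wᵀ * B) ⊙ (Wᵀ * B)) α β := by
  rw [← frobNorm_transpose_mul_mul hW hB, frobNorm_sq]
  have h : Wᵀ * (W * diagonal a * Wᵀ - B * diagonal b * Bᵀ) * B =
      diagonal a * (Wᵀ * B) - (Wᵀ * B) * diagonal b := by
    simp only [Matrix.mul_sub, Matrix.sub_mul, ← Matrix.mul_assoc, hW, Matrix.one_mul]
    simp only [Matrix.mul_assoc, hB, Matrix.mul_one]
  refine Finset.sum_congr rfl fun α _ => Finset.sum_congr rfl fun β _ => ?_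
  rw [h, Matrix.sub_apply, diagonal_mul, mul_diagonal, hadamard_apply]
  ring

end Frobenius

lemma blockSum_hadamard_self_compl_map {n κ : Type*} [Fintype n] [DecidableEq n] [Fintype κ]
    {X : Matrix n n ℝ} (hX : Xᵀ * X = 1) (e : κ ↪ n) :
    blockSum (X ⊙ X) (Finset.univ.map e)ᶜ (Finset.univ.map e) =
      Fintype.card κ - frobNorm (X.submatrix e e) ^ 2 := by
  rw [blockSum_compl_left (hadamard_self_mem_doublyStochastic hX), Finset.card_map,
    Finset.card_univ, frobNorm_sq]
  simp [blockSum, Finset.sum_map, sq]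

lemma Fin.mem_map_addNatEmb_trans_castLEEmb {d k p : ℕ} (h : d + k ≤ p) (β : Fin p) :
    β ∈ Finset.univ.map ((Fin.addNatEmb k).trans (Fin.castLEEmb h)) ↔ k ≤ β.1 ∧ β.1 < d + k := by
  simp only [Finset.mem_map, Finset.mem_univ, true_and, Function.Embedding.trans_apply,
    Fin.addNatEmb_apply, Fin.castLEEmb_apply, Fin.ext_iff, Fin.val_castLE, Fin.val_addNat]
  exact ⟨fun ⟨j, hj⟩ => by omega, fun hβ => ⟨⟨β - k, by omega⟩, by simp only; omega⟩⟩

lemma sqrt_le_two_mul_div_of_sq_mul_le {x E δ : ℝ} (hδ : 0 < δ) (hE : 0 ≤ E)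
    (h : (δ / 2) ^ 2 * x ≤ E ^ 2) : √x ≤ 2 * E / δ := by
  refine Real.sqrt_le_iff.2 ⟨by positivity, ?_⟩
  rw [div_pow, le_div_iff₀ (by positivity)]
  nlinarith

theorem sq_mul_blockSum_compl_le_of_gap {p r s : ℕ} (hr : 1 ≤ r) (hrs : r ≤ s) (hsp : s ≤ p)
    {lam lamh : ℕ → ℝ} (hmono : ∀ i j, 1 ≤ i → i ≤ j → j ≤ p → lam j ≤ lam i)
    (hmonoh : ∀ i j, 1 ≤ i → i ≤ j → j ≤ p → lamh j ≤ lamh i)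
    {δ : ℝ} (hδ : 0 < δ) (hgapr : 1 < r → δ ≤ lam (r - 1) - lam r)
    (hgaps : s < p → δ ≤ lam s - lam (s + 1))
    {M : Matrix (Fin p) (Fin p) ℝ} (hM : M ∈ doublyStochastic ℝ (Fin p))
    {I : Finset (Fin p)} (hI : ∀ β, β ∈ I ↔ r ≤ β.1 + 1 ∧ β.1 + 1 ≤ s) :
    (δ / 2) ^ 2 * blockSum M Iᶜ I ≤
      ∑ α, ∑ β, (lamh (α.1 + 1) - lam (β.1 + 1)) ^ 2 * M α β := by
  set H := Finset.univ.filter fun β : Fin p => β.1 + 1 < r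
  set L := Finset.univ.filter fun β : Fin p => s < β.1 + 1
  have hHL : I = (H ∪ L)ᶜ := by
    ext β
    simp only [hI, H, L, Finset.mem_compl, Finset.mem_union, Finset.mem_filter, Finset.mem_univ,
      true_and]
    omega
  have hH : IsLowerSet (H : Set (Fin p)) := fun x y hyx hx => by
    simp only [H, Finset.coe_filter, Finset.mem_univ, true_and, Set.mem_ofPred_eq] at hx ⊢
    exact lt_of_le_of_lt (Nat.succ_le_succ hyx) hx
  have hL : IsUpperSet (L : Set (Fin p)) := fun x y hxy hx => by
    simp only [L, Finset.coe_filter, Finset.mem_univ, true_and, Set.mem_ofPred_eq] at hx ⊢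
    exact lt_of_lt_of_le hx (Nat.succ_le_succ hxy)
  rw [hHL, compl_compl]
  refine sq_mul_blockSum_le hM (fun x y hxy => hmonoh _ _ (by omega) (Nat.succ_le_succ hxy)
    (by omega)) hH hL (Finset.disjoint_filter.2 fun β _ h h' => by omega) (half_pos hδ)
    (hmono r s hr hrs hsp) (fun β hβ => ?_) (fun β hβ => ?_) (fun β hβ => ?_)
  · have := (Finset.mem_filter.1 hβ).2
    linarith [hgapr (by omega), hmono (β.1 + 1) (r - 1) (by omega) (by omega) (by omega)]
  · rw [← hHL, hI] at hβ
    exact ⟨hmono _ _ (by omega) hβ.2 hsp, hmono _ _ hr hβ.1 (by omega)⟩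
  · have := (Finset.mem_filter.1 hβ).2
    linarith [hgaps (by omega), hmono (s + 1) (β.1 + 1) (by omega) (by omega) (by omega)]

theorem stmt1_general
    (p r s d : ℕ) (hr : 1 ≤ r) (hrs : r ≤ s) (hsp : s ≤ p) (hd : d = s - r + 1)
    (lam lamh : ℕ → ℝ)
    (hmono : ∀ i j, 1 ≤ i → i ≤ j → j ≤ p → lam j ≤ lam i)
    (hmonoh : ∀ i j, 1 ≤ i → i ≤ j → j ≤ p → lamh j ≤ lamh i)
    (S Sh : Matrix (Fin p) (Fin p) ℝ)
    (hSspec : ∃ Q : Matrix (Fin p) (Fin p) ℝ, Qᵀ * Q = 1 ∧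
      S = Q * Matrix.diagonal (fun i : Fin p => lam (i.1 + 1)) * Qᵀ)
    (hShspec : ∃ Q : Matrix (Fin p) (Fin p) ℝ, Qᵀ * Q = 1 ∧
      Sh = Q * Matrix.diagonal (fun i : Fin p => lamh (i.1 + 1)) * Qᵀ)
    (δ : ℝ) (hδ : 0 < δ)
    (hgapr : 1 < r → δ ≤ lam (r - 1) - lam r)
    (hgaps : s < p → δ ≤ lam s - lam (s + 1))
    (V Vh : Matrix (Fin p) (Fin d) ℝ) (hV : Vᵀ * V = 1) (hVh : Vhᵀ * Vh = 1)
    (hVeig : ∀ j : Fin d, S.mulVec (fun i => V i j) = lam (r + j.1) • (fun i => V i j))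
    (hVheig : ∀ j : Fin d, Sh.mulVec (fun i => Vh i j) = lamh (r + j.1) • (fun i => Vh i j)) :
    Real.sqrt ((d : ℝ) - (frobNorm (Vhᵀ * V)) ^ 2) ≤ 2 * frobNorm (Sh - S) / δ := by
  let e : Fin d ↪ Fin p := (Fin.addNatEmb (r - 1)).trans (Fin.castLEEmb (by omega))
  have he : ∀ j : Fin d, (e j : ℕ) + 1 = r + j := fun j => by simp [e]; omega
  obtain ⟨B, hB, hSB, hBV⟩ := exists_spectral_decomposition_extending hSspec hV e
    fun j => by simpa only [he] using hVeig j
  obtain ⟨W, hW, hShW, hWV⟩ := exists_spectral_decomposition_extending hShspec hVh e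
    fun j => by simpa only [he] using hVheig j
  have hX : (Wᵀ * B)ᵀ * (Wᵀ * B) = 1 := by
    rw [transpose_mul, transpose_transpose, Matrix.mul_assoc, ← Matrix.mul_assoc W,
      mul_eq_one_comm.1 hW, Matrix.one_mul, hB]
  have hI : ∀ β, β ∈ Finset.univ.map e ↔ r ≤ β.1 + 1 ∧ β.1 + 1 ≤ s := fun β => by
    rw [Fin.mem_map_addNatEmb_trans_castLEEmb]
    omega
  have hcore := sq_mul_blockSum_compl_le_of_gap hr hrs hsp hmono hmonoh hδ hgapr hgaps
    (hadamard_self_mem_doublyStochastic hX) hI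
  rw [blockSum_hadamard_self_compl_map hX e, submatrix_mul _ _ _ id _ Function.bijective_id,
    ← transpose_submatrix, hWV, hBV, Fintype.card_fin, ← frobNorm_sub_sq hW hB, ← hShW, ← hSB]
    at hcore
  exact sqrt_le_two_mul_div_of_sq_mul_le hδ (Real.sqrt_nonneg _) hcore

theorem stmt1
    (p r s d : ℕ) (hr : 1 ≤ r) (hrs : r ≤ s) (hsp : s ≤ p) (hd : d = s - r + 1)
    (lam lamh : ℕ → ℝ)
    (hmono : ∀ i j, 1 ≤ i → i ≤ j → j ≤ p → lam j ≤ lam i)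
    (hmonoh : ∀ i j, 1 ≤ i → i ≤ j → j ≤ p → lamh j ≤ lamh i)
    (S Sh : Matrix (Fin p) (Fin p) ℝ) (hSsymm : S.IsSymm) (hShsymm : Sh.IsSymm)
    (hSspec : ∃ Q : Matrix (Fin p) (Fin p) ℝ, Qᵀ * Q = 1 ∧
      S = Q * Matrix.diagonal (fun i : Fin p => lam (i.1 + 1)) * Qᵀ)
    (hShspec : ∃ Q : Matrix (Fin p) (Fin p) ℝ, Qᵀ * Q = 1 ∧
      Sh = Q * Matrix.diagonal (fun i : Fin p => lamh (i.1 + 1)) * Qᵀ)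
    (δ : ℝ) (hδ : 0 < δ)
    (hgapr : 1 < r → δ ≤ lam (r - 1) - lam r)
    (hgaps : s < p → δ ≤ lam s - lam (s + 1))
    (V Vh : Matrix (Fin p) (Fin d) ℝ) (hV : Vᵀ * V = 1) (hVh : Vhᵀ * Vh = 1)
    (hVeig : ∀ j : Fin d, S.mulVec (fun i => V i j) = lam (r + j.1) • (fun i => V i j))
    (hVheig : ∀ j : Fin d, Sh.mulVec (fun i => Vh i j) = lamh (r + j.1) • (fun i => Vh i j)) :
    Real.sqrt ((d : ℝ) - (frobNorm (Vhᵀ * V)) ^ 2) ≤ 2 * frobNorm (Sh - S) / δ :=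
  stmt1_general p r s d hr hrs hsp hd lam lamh hmono hmonoh S Sh hSspec hShspec δ hδ hgapr hgaps V
    Vh hV hVh hVeig hVheig
end

section
/- Let Σ, Σ̂ ∈ ℝ^{p×p} be symmetric matrices with eigenvalues λ₁ ≥ … ≥ λ_p and λ̂₁ ≥ … ≥ λ̂_p respectively, fix j ∈ {1, …, p}, and assume δ := min(λ_{j−1} − λ_j, λ_j − λ_{j+1}) > 0 (with λ₀ := ∞, λ_{p+1} := −∞). If the unit vectors v, v̂ ∈ ℝ^p satisfy Σv = λ_j v and Σ̂v̂ = λ̂_j v̂, then (1 − (v̂ᵀv)²)^{1/2} ≤ 2 ‖Σ̂ − Σ‖_op / δ. -/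
/-!
Weyl's inequality |λ̂ⱼ - λⱼ| ≤ ‖Σ̂ - Σ‖ holds because some nonzero x lies both in the span of the
top j eigenvectors of Σ and in the span of the bottom p - j + 1 eigenvectors of Σ̂, so that
λⱼ‖x‖² ≤ xᵀΣx and xᵀΣ̂x ≤ λ̂ⱼ‖x‖². With it the residual of v̂ for Σ is small:
‖(Σ - λⱼ)v̂‖ ≤ ‖(Σ - Σ̂)v̂‖ + |λ̂ⱼ - λⱼ| ≤ 2‖Σ̂ - Σ‖. In the eigenbasis of Σ, v is the j-th
coordinate vector up to sign, and writing a for the coordinates of v̂,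
‖(Σ - λⱼ)v̂‖² = ∑ᵢ (λᵢ - λⱼ)² aᵢ² ≥ δ² ∑_{i ≠ j} aᵢ² = δ² (1 - (v̂ᵀv)²).
-/

open Matrix

open WithLp

lemma norm_toLp_sq {n : Type*} [Fintype n] (x : n → ℝ) : ‖toLp 2 x‖ ^ 2 = x ⬝ᵥ x := by
  rw [← real_inner_self_eq_norm_sq, EuclideanSpace.inner_toLp_toLp, star_trivial]

lemma norm_toLp_mulVec_le {p q : ℕ} (A : Matrix (Fin p) (Fin q) ℝ) (x : Fin q → ℝ) :
    ‖toLp 2 (A *ᵥ x)‖ ≤ opNorm A * ‖toLp 2 x‖ :=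
  (LinearMap.toContinuousLinearMap (toEuclideanLin A)).le_opNorm (toLp 2 x)

lemma abs_dotProduct_mulVec_le {p : ℕ} (A : Matrix (Fin p) (Fin p) ℝ) (x : Fin p → ℝ) :
    |x ⬝ᵥ (A *ᵥ x)| ≤ opNorm A * (x ⬝ᵥ x) :=
  calc |x ⬝ᵥ (A *ᵥ x)| = |inner ℝ (toLp 2 x) (toLp 2 (A *ᵥ x))| := by
        rw [EuclideanSpace.inner_toLp_toLp, star_trivial, dotProduct_comm]
    _ ≤ ‖toLp 2 x‖ * ‖toLp 2 (A *ᵥ x)‖ := abs_real_inner_le_norm _ _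
    _ ≤ ‖toLp 2 x‖ * (opNorm A * ‖toLp 2 x‖) := by gcongr; exact norm_toLp_mulVec_le A x
    _ = opNorm A * (x ⬝ᵥ x) := by rw [← norm_toLp_sq]; ring

lemma opNorm_sub_comm {p q : ℕ} (A B : Matrix (Fin p) (Fin q) ℝ) :
    opNorm (A - B) = opNorm (B - A) := by
  rw [opNorm, opNorm, ← neg_sub, map_neg, map_neg, norm_neg]

lemma norm_toLp_mulVec_sub_smul_le {p : ℕ} {A A' : Matrix (Fin p) (Fin p) ℝ} {μ μ' : ℝ}
    {w : Fin p → ℝ} (hw : A' *ᵥ w = μ' • w) :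
    ‖toLp 2 (A *ᵥ w - μ • w)‖ ≤ (opNorm (A' - A) + |μ' - μ|) * ‖toLp 2 w‖ := by
  have hsplit : A *ᵥ w - μ • w = (A - A') *ᵥ w + (μ' - μ) • w := by
    rw [sub_mulVec, hw, sub_smul]; abel
  rw [hsplit, toLp_add, toLp_smul, add_mul, opNorm_sub_comm]
  refine (norm_add_le _ _).trans (add_le_add (norm_toLp_mulVec_le _ _) ?_)
  rw [norm_smul, Real.norm_eq_abs]

section OrthogonalConjugate

variable {n : Type*} [Fintype n] [DecidableEq n] {Q : Matrix n n ℝ}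

lemma dotProduct_transpose_mulVec (hQ : Qᵀ * Q = 1) (x y : n → ℝ) :
    (Qᵀ *ᵥ x) ⬝ᵥ (Qᵀ *ᵥ y) = x ⬝ᵥ y := by
  rw [dotProduct_mulVec, ← mulVec_transpose, transpose_transpose, mulVec_mulVec,
    mul_eq_one_comm.mp hQ, one_mulVec]

lemma norm_toLp_transpose_mulVec (hQ : Qᵀ * Q = 1) (x : n → ℝ) :
    ‖toLp 2 (Qᵀ *ᵥ x)‖ = ‖toLp 2 x‖ := by
  rw [← sq_eq_sq₀ (norm_nonneg _) (norm_nonneg _), norm_toLp_sq, norm_toLp_sq,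
    dotProduct_transpose_mulVec hQ]

lemma transpose_mulVec_conj_diagonal_mulVec (hQ : Qᵀ * Q = 1) (d x : n → ℝ) :
    Qᵀ *ᵥ ((Q * diagonal d * Qᵀ) *ᵥ x) = d * (Qᵀ *ᵥ x) := by
  rw [mulVec_mulVec, ← Matrix.mul_assoc, ← Matrix.mul_assoc, hQ, Matrix.one_mul,
    ← mulVec_mulVec]
  ext i
  exact mulVec_diagonal d _ i

lemma dotProduct_conj_diagonal_mulVec (d x : n → ℝ) :
    x ⬝ᵥ ((Q * diagonal d * Qᵀ) *ᵥ x) = ∑ i, d i * (Qᵀ *ᵥ x) i ^ 2 := by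
  rw [← mulVec_mulVec, ← mulVec_mulVec, dotProduct_mulVec, ← mulVec_transpose]
  simp only [dotProduct, mulVec_diagonal]
  exact Finset.sum_congr rfl fun i _ => by ring

lemma mul_dotProduct_self_le_of_support (hQ : Qᵀ * Q = 1) {d x : n → ℝ} {c : ℝ}
    (h : ∀ i, (Qᵀ *ᵥ x) i ≠ 0 → c ≤ d i) :
    c * (x ⬝ᵥ x) ≤ x ⬝ᵥ ((Q * diagonal d * Qᵀ) *ᵥ x) := by
  rw [← dotProduct_transpose_mulVec hQ x x, dotProduct_conj_diagonal_mulVec, dotProduct,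
    Finset.mul_sum]
  refine Finset.sum_le_sum fun i _ => ?_
  by_cases hi : (Qᵀ *ᵥ x) i = 0
  · simp [hi]
  · rw [sq]
    exact mul_le_mul_of_nonneg_right (h i hi) (mul_self_nonneg _)

lemma dotProduct_le_mul_dotProduct_self_of_support (hQ : Qᵀ * Q = 1) {d x : n → ℝ} {c : ℝ}
    (h : ∀ i, (Qᵀ *ᵥ x) i ≠ 0 → d i ≤ c) :
    x ⬝ᵥ ((Q * diagonal d * Qᵀ) *ᵥ x) ≤ c * (x ⬝ᵥ x) := by
  have h' := mul_dotProduct_self_le_of_support hQ (d := -d) (c := -c) fun i hi =>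
    neg_le_neg (h i hi)
  rw [show diagonal (-d) = -diagonal d from (diagonal_neg d).symm, Matrix.mul_neg,
    Matrix.neg_mul, neg_mulVec, dotProduct_neg] at h'
  linarith

lemma transpose_mulVec_apply_eq_zero_of_ne (hQ : Qᵀ * Q = 1) {d v : n → ℝ} {μ : ℝ}
    (hv : (Q * diagonal d * Qᵀ) *ᵥ v = μ • v) {i : n} (hi : d i ≠ μ) : (Qᵀ *ᵥ v) i = 0 := by
  have h := congrFun (transpose_mulVec_conj_diagonal_mulVec hQ d v) i
  rw [hv, mulVec_smul, Pi.smul_apply, Pi.mul_apply, smul_eq_mul] at h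
  by_contra hne
  exact hi (mul_right_cancel₀ hne h).symm

lemma sq_mul_one_sub_sq_dotProduct_le (hQ : Qᵀ * Q = 1) {d : n → ℝ} {k : n} {δ : ℝ}
    (hδ : 0 < δ) (hgap : ∀ i ≠ k, δ ≤ |d i - d k|) {v w : n → ℝ} (hv : ‖toLp 2 v‖ = 1)
    (hw : ‖toLp 2 w‖ = 1) (hvk : (Q * diagonal d * Qᵀ) *ᵥ v = d k • v) :
    δ ^ 2 * (1 - (w ⬝ᵥ v) ^ 2) ≤ ‖toLp 2 ((Q * diagonal d * Qᵀ) *ᵥ w - d k • w)‖ ^ 2 := by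
  set a := Qᵀ *ᵥ w
  set b := Qᵀ *ᵥ v
  have hb : ∀ i ≠ k, b i = 0 := fun i hi =>
    transpose_mulVec_apply_eq_zero_of_ne hQ hvk fun h => by
      have := hgap i hi
      rw [h, sub_self, abs_zero] at this
      linarith
  have hdot_b (c : n → ℝ) : c ⬝ᵥ b = c k * b k :=
    Finset.sum_eq_single k (fun i _ hi => by rw [hb i hi, mul_zero]) (by simp)
  have hbk : b k ^ 2 = 1 := by
    rw [← one_pow 2, ← hv, norm_toLp_sq, ← dotProduct_transpose_mulVec hQ, hdot_b, sq]
  have hsin : 1 - (w ⬝ᵥ v) ^ 2 = ∑ i ∈ Finset.univ.erase k, a i ^ 2 := by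
    rw [← dotProduct_transpose_mulVec hQ, hdot_b, mul_pow, hbk, mul_one, ← one_pow 2, ← hw,
      norm_toLp_sq, ← dotProduct_transpose_mulVec hQ, dotProduct,
      ← Finset.add_sum_erase _ _ (Finset.mem_univ k)]
    simp only [sq, a, add_sub_cancel_left]
  have hres : ‖toLp 2 ((Q * diagonal d * Qᵀ) *ᵥ w - d k • w)‖ ^ 2
      = ∑ i, (d i - d k) ^ 2 * a i ^ 2 := by
    rw [← norm_toLp_transpose_mulVec hQ, norm_toLp_sq, mulVec_sub, mulVec_smul,
      transpose_mulVec_conj_diagonal_mulVec hQ]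
    simp only [dotProduct, Pi.sub_apply, Pi.mul_apply, Pi.smul_apply, smul_eq_mul]
    exact Finset.sum_congr rfl fun i _ => by ring
  rw [hsin, hres, Finset.mul_sum]
  calc ∑ i ∈ Finset.univ.erase k, δ ^ 2 * a i ^ 2
      ≤ ∑ i ∈ Finset.univ.erase k, (d i - d k) ^ 2 * a i ^ 2 :=
        Finset.sum_le_sum fun i hi => by
          rw [← sq_abs (d i - d k)]
          gcongr
          exact hgap i (Finset.ne_of_mem_erase hi)
    _ ≤ ∑ i, (d i - d k) ^ 2 * a i ^ 2 :=
        Finset.sum_le_sum_of_subset_of_nonneg (Finset.subset_univ _) fun i _ _ => by positivity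

end OrthogonalConjugate

lemma exists_ne_zero_mulVec_eq_zero_above_below {n R : Type*} [Fintype n] [DecidableEq n]
    [LinearOrder n] [CommRing R] [IsDomain R] (A B : Matrix n n R) (k : n) :
    ∃ x ≠ 0, (∀ i, k < i → (A *ᵥ x) i = 0) ∧ (∀ i, i < k → (B *ᵥ x) i = 0) := by
  let M : Matrix n n R := of fun i => if k < i then A i else if i < k then B i else 0
  obtain ⟨x, hx, hMx⟩ := exists_mulVec_eq_zero_iff.mpr <|
    det_eq_zero_of_row_eq_zero (A := M) k fun _ => by simp [M]
  refine ⟨x, hx, fun i hi => ?_, fun i hi => ?_⟩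
  · simpa [M, mulVec, hi] using congrFun hMx i
  · simpa [M, mulVec, hi, hi.not_gt] using congrFun hMx i

section Weyl

variable {p : ℕ} {Q Q' : Matrix (Fin p) (Fin p) ℝ} {d d' : Fin p → ℝ}

lemma le_add_opNorm_sub_of_antitone (hQ : Qᵀ * Q = 1) (hQ' : Q'ᵀ * Q' = 1) (hd : Antitone d)
    (hd' : Antitone d') (k : Fin p) :
    d k ≤ d' k + opNorm (Q' * diagonal d' * Q'ᵀ - Q * diagonal d * Qᵀ) := by
  -- `x` is spanned by the eigenvectors of the first `k + 1` eigenvalues of the first matrix and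
  -- by those of the last `p - k` eigenvalues of the second
  obtain ⟨x, hx, hx_top, hx_bot⟩ := exists_ne_zero_mulVec_eq_zero_above_below Qᵀ Q'ᵀ k
  have hS : d k * (x ⬝ᵥ x) ≤ x ⬝ᵥ ((Q * diagonal d * Qᵀ) *ᵥ x) :=
    mul_dotProduct_self_le_of_support hQ fun i hi => hd (not_lt.mp (mt (hx_top i) hi))
  have hS' : x ⬝ᵥ ((Q' * diagonal d' * Q'ᵀ) *ᵥ x) ≤ d' k * (x ⬝ᵥ x) :=
    dotProduct_le_mul_dotProduct_self_of_support hQ' fun i hi => hd' (not_lt.mp (mt (hx_bot i) hi))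
  have hE := abs_le.mp (abs_dotProduct_mulVec_le (Q' * diagonal d' * Q'ᵀ - Q * diagonal d * Qᵀ) x)
  rw [sub_mulVec, dotProduct_sub] at hE
  have hx2 : 0 < x ⬝ᵥ x :=
    (Finset.sum_nonneg fun i _ => mul_self_nonneg (x i)).lt_of_ne
      (Ne.symm (dotProduct_self_eq_zero.not.mpr hx))
  refine le_of_mul_le_mul_right ?_ hx2
  linarith [hE.1]

lemma abs_sub_le_opNorm_sub_of_antitone (hQ : Qᵀ * Q = 1) (hQ' : Q'ᵀ * Q' = 1)
    (hd : Antitone d) (hd' : Antitone d') (k : Fin p) :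
    |d' k - d k| ≤ opNorm (Q' * diagonal d' * Q'ᵀ - Q * diagonal d * Qᵀ) := by
  have h := le_add_opNorm_sub_of_antitone hQ hQ' hd hd' k
  have h' := le_add_opNorm_sub_of_antitone hQ' hQ hd' hd k
  rw [opNorm_sub_comm] at h'
  exact abs_sub_le_iff.mpr ⟨by linarith, by linarith⟩

end Weyl

section SortedSpectrum

variable {p : ℕ} {lam : ℕ → ℝ}

lemma antitone_comp_fin_succ (hmono : ∀ i j, 1 ≤ i → i ≤ j → j ≤ p → lam j ≤ lam i) :
    Antitone fun i : Fin p => lam (i.1 + 1) :=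
  fun i i' h => hmono _ _ (by omega) (by simpa using h) (by omega)

lemma le_abs_sub_of_gaps (hmono : ∀ i j, 1 ≤ i → i ≤ j → j ≤ p → lam j ≤ lam i) {j : ℕ} {δ : ℝ}
    (hjp : j ≤ p) (hgapl : 1 < j → δ ≤ lam (j - 1) - lam j)
    (hgapu : j < p → δ ≤ lam j - lam (j + 1)) {i : ℕ} (hi1 : 1 ≤ i) (hip : i ≤ p) (hij : i ≠ j) :
    δ ≤ |lam i - lam j| := by
  rcases lt_or_gt_of_ne hij with hlt | hgt
  · have := hmono i (j - 1) hi1 (by omega) (by omega)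
    exact le_abs.mpr (Or.inl (by linarith [hgapl (by omega)]))
  · have := hmono (j + 1) i (by omega) hgt hip
    exact le_abs.mpr (Or.inr (by linarith [hgapu (by omega)]))

end SortedSpectrum

theorem stmt3_general
    (p j : ℕ) (hj1 : 1 ≤ j) (hjp : j ≤ p)
    (lam lamh : ℕ → ℝ)
    (hmono : ∀ i j, 1 ≤ i → i ≤ j → j ≤ p → lam j ≤ lam i)
    (hmonoh : ∀ i j, 1 ≤ i → i ≤ j → j ≤ p → lamh j ≤ lamh i)
    (S Sh : Matrix (Fin p) (Fin p) ℝ)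
    (hSspec : ∃ Q : Matrix (Fin p) (Fin p) ℝ, Qᵀ * Q = 1 ∧
      S = Q * Matrix.diagonal (fun i : Fin p => lam (i.1 + 1)) * Qᵀ)
    (hShspec : ∃ Q : Matrix (Fin p) (Fin p) ℝ, Qᵀ * Q = 1 ∧
      Sh = Q * Matrix.diagonal (fun i : Fin p => lamh (i.1 + 1)) * Qᵀ)
    (δ : ℝ) (hδ : 0 < δ)
    (hgapl : 1 < j → δ ≤ lam (j - 1) - lam j)
    (hgapu : j < p → δ ≤ lam j - lam (j + 1))
    (v vh : Fin p → ℝ) (hv : ∑ i, (v i) ^ 2 = 1) (hvh : ∑ i, (vh i) ^ 2 = 1)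
    (hveig : S.mulVec v = lam j • v) (hvheig : Sh.mulVec vh = lamh j • vh) :
    Real.sqrt (1 - (∑ i, vh i * v i) ^ 2) ≤ 2 * opNorm (Sh - S) / δ := by
  obtain ⟨Q, hQ, hS⟩ := hSspec
  obtain ⟨Qh, hQh, hSh⟩ := hShspec
  -- after this, `lam (j + 1)` is the eigenvalue at `⟨j, _⟩ : Fin p` definitionally
  obtain ⟨j, rfl⟩ : ∃ j', j = j' + 1 := ⟨j - 1, by omega⟩
  have hunit (x : Fin p → ℝ) (hx : ∑ i, x i ^ 2 = 1) : ‖toLp 2 x‖ = 1 := by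
    simp [EuclideanSpace.norm_eq, Real.norm_eq_abs, sq_abs, hx]
  have hweyl : |lamh (j + 1) - lam (j + 1)| ≤ opNorm (Sh - S) := by
    rw [hS, hSh]
    exact abs_sub_le_opNorm_sub_of_antitone hQ hQh (antitone_comp_fin_succ hmono)
      (antitone_comp_fin_succ hmonoh) ⟨j, by omega⟩
  have hres : ‖toLp 2 (S *ᵥ vh - lam (j + 1) • vh)‖ ≤ 2 * opNorm (Sh - S) := by
    have h := norm_toLp_mulVec_sub_smul_le (A := S) (μ := lam (j + 1)) hvheig
    rw [hunit vh hvh, mul_one] at h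
    linarith
  rw [hS] at hveig
  have hsin := sq_mul_one_sub_sq_dotProduct_le hQ (d := fun i : Fin p => lam (i.1 + 1))
    (k := ⟨j, by omega⟩) hδ
    (fun i hi => le_abs_sub_of_gaps hmono hjp hgapl hgapu (by omega) (by omega)
      fun h => hi (Fin.ext (Nat.succ_injective h))) (hunit v hv) (hunit vh hvh) hveig
  rw [← hS] at hsin
  have key := Real.sqrt_le_sqrt (hsin.trans (pow_le_pow_left₀ (norm_nonneg _) hres 2))
  rw [Real.sqrt_mul (sq_nonneg δ), Real.sqrt_sq hδ.le,
    Real.sqrt_sq ((norm_nonneg _).trans hres)] at key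
  rw [le_div_iff₀ hδ]
  exact (mul_comm _ _).trans_le key

theorem stmt3
    (p j : ℕ) (hj1 : 1 ≤ j) (hjp : j ≤ p)
    (lam lamh : ℕ → ℝ)
    (hmono : ∀ i j, 1 ≤ i → i ≤ j → j ≤ p → lam j ≤ lam i)
    (hmonoh : ∀ i j, 1 ≤ i → i ≤ j → j ≤ p → lamh j ≤ lamh i)
    (S Sh : Matrix (Fin p) (Fin p) ℝ) (hSsymm : S.IsSymm) (hShsymm : Sh.IsSymm)
    (hSspec : ∃ Q : Matrix (Fin p) (Fin p) ℝ, Qᵀ * Q = 1 ∧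
      S = Q * Matrix.diagonal (fun i : Fin p => lam (i.1 + 1)) * Qᵀ)
    (hShspec : ∃ Q : Matrix (Fin p) (Fin p) ℝ, Qᵀ * Q = 1 ∧
      Sh = Q * Matrix.diagonal (fun i : Fin p => lamh (i.1 + 1)) * Qᵀ)
    (δ : ℝ) (hδ : 0 < δ)
    (hgapl : 1 < j → δ ≤ lam (j - 1) - lam j)
    (hgapu : j < p → δ ≤ lam j - lam (j + 1))
    (v vh : Fin p → ℝ) (hv : ∑ i, (v i) ^ 2 = 1) (hvh : ∑ i, (vh i) ^ 2 = 1)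
    (hveig : S.mulVec v = lam j • v) (hvheig : Sh.mulVec vh = lamh j • vh) :
    Real.sqrt (1 - (∑ i, vh i * v i) ^ 2) ≤ 2 * opNorm (Sh - S) / δ :=
  stmt3_general p j hj1 hjp lam lamh hmono hmonoh S Sh hSspec hShspec δ hδ hgapl hgapu v vh hv hvh
    hveig hvheig
end

section
/- Let V, V̂ ∈ ℝ^{p×d} both have orthonormal columns. Then there exists an orthogonal matrix Ô ∈ ℝ^{d×d} such that ‖V̂Ô − V‖_F² ≤ 2 (d − ‖V̂ᵀV‖_F²). -/
/-!
Write `M = V̂ᵀV = U Σ Wᵀ` in singular value decomposition and take `Ô = U Wᵀ`. Then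
`‖V̂Ô − V‖_F² = 2d − 2 tr(ÔᵀM) = 2d − 2 ∑ σᵢ`, while `‖V̂ᵀV‖_F² = ∑ σᵢ²`. Since
`1 − MᵀM = (V − V̂M)ᵀ(V − V̂M)` is positive semidefinite, every `σᵢ ≤ 1`, so `σᵢ² ≤ σᵢ`.
-/

open Matrix

variable {m n : Type*} [Fintype m] [Fintype n]

theorem frobNorm_sq_s13 (A : Matrix m n ℝ) : frobNorm A ^ 2 = trace (Aᵀ * A) := by
  rw [frobNorm, Real.sq_sqrt (by positivity), trace, Finset.sum_comm]
  simp [mul_apply, sq]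

variable [DecidableEq n]

theorem trace_mul_mul_transpose_of_transpose_mul_eq_one {W : Matrix n n ℝ} (hW : Wᵀ * W = 1)
    (D : Matrix n n ℝ) : trace (W * D * Wᵀ) = trace D := by
  rw [trace_mul_comm, ← Matrix.mul_assoc, hW, Matrix.one_mul]

theorem transpose_mul_eq_one_of_orthonormalBasis
    (u : OrthonormalBasis n ℝ (EuclideanSpace ℝ n)) :
    ((EuclideanSpace.basisFun n ℝ).toBasis.toMatrix u)ᵀ *
      (EuclideanSpace.basisFun n ℝ).toBasis.toMatrix u = 1 := by
  simpa [star_eq_conjTranspose] using mem_unitaryGroup_iff'.mp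
    ((EuclideanSpace.basisFun n ℝ).toMatrix_orthonormalBasis_mem_unitary u)

theorem Matrix.exists_orthonormalBasis_mulVec_eq_smul (M : Matrix n n ℝ) :
    ∃ (w u : OrthonormalBasis n ℝ (EuclideanSpace ℝ n)) (σ : n → ℝ), (∀ i, 0 ≤ σ i) ∧
      ∀ i, WithLp.toLp 2 (M *ᵥ w i) = σ i • u i := by
  have hS : (Mᵀ * M).PosSemidef := by
    simpa using posSemidef_conjTranspose_mul_self M
  set w := hS.1.eigenvectorBasis
  set ev := hS.1.eigenvalues
  set σ : n → ℝ := fun i => √(ev i)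
  have hσ : ∀ i, σ i ^ 2 = ev i := fun i => Real.sq_sqrt (hS.eigenvalues_nonneg i)
  have hσ0 : ∀ i, ev i ≠ 0 → σ i ≠ 0 := fun i hi h => hi (by rw [← hσ, h, sq, zero_mul])
  set b : n → EuclideanSpace ℝ n := fun i => WithLp.toLp 2 (M *ᵥ w i)
  have hb : ∀ i j, inner ℝ (b i) (b j) = ev i * inner ℝ (w i) (w j) := by
    intro i j
    simp only [b, EuclideanSpace.inner_eq_star_dotProduct, star_trivial]
    rw [dotProduct_mulVec, ← vecMul_transpose, vecMul_vecMul, ← dotProduct_mulVec,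
      hS.1.mulVec_eigenvectorBasis, dotProduct_smul, smul_eq_mul]
  -- the `b i` are orthogonal with `‖b i‖² = ev i`: normalise the nonzero ones and complete
  obtain ⟨u, hu⟩ := Orthonormal.exists_orthonormalBasis_extension_of_card_eq (𝕜 := ℝ)
    (v := fun i => (σ i)⁻¹ • b i) (s := {i | ev i ≠ 0}) (by simp) (by
      rw [orthonormal_iff_ite]
      rintro ⟨i, hi⟩ ⟨j, hj⟩
      simp only [Set.domRestrict_apply, real_inner_smul_left, real_inner_smul_right, hb,
        orthonormal_iff_ite.mp w.orthonormal, Subtype.mk.injEq]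
      split_ifs with h
      · subst h
        have := hσ0 i hi
        rw [← hσ]
        field_simp
      · simp)
  refine ⟨w, u, σ, fun i => Real.sqrt_nonneg _, fun i => ?_⟩
  by_cases hi : ev i = 0
  · have hbi : inner ℝ (b i) (b i) = 0 := by rw [hb, hi, zero_mul]
    simp [b, inner_self_eq_zero.mp hbi, σ, hi]
  · rw [hu i hi, smul_smul, mul_inv_cancel₀ (hσ0 i hi), one_smul]

theorem Matrix.exists_eq_mul_diagonal_mul_transpose (M : Matrix n n ℝ) :
    ∃ (U W : Matrix n n ℝ) (σ : n → ℝ), Uᵀ * U = 1 ∧ Wᵀ * W = 1 ∧ (∀ i, 0 ≤ σ i) ∧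
      M = U * diagonal σ * Wᵀ := by
  obtain ⟨w, u, σ, hσ, hMw⟩ := M.exists_orthonormalBasis_mulVec_eq_smul
  set U : Matrix n n ℝ := (EuclideanSpace.basisFun n ℝ).toBasis.toMatrix u
  set W : Matrix n n ℝ := (EuclideanSpace.basisFun n ℝ).toBasis.toMatrix w
  have hW : Wᵀ * W = 1 := transpose_mul_eq_one_of_orthonormalBasis w
  have hMW : M * W = U * diagonal σ := by
    ext i j
    rw [mul_diagonal, mul_comm]
    simpa [U, W, mul_apply, mulVec, dotProduct, Module.Basis.toMatrix_apply]
      using congrArg (· i) (hMw j)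
  refine ⟨U, W, σ, transpose_mul_eq_one_of_orthonormalBasis u, hW, hσ, ?_⟩
  rw [← hMW, Matrix.mul_assoc, mul_eq_one_comm.mp hW, Matrix.mul_one]

theorem exists_orthogonal_trace_transpose_mul_self_le (M : Matrix n n ℝ)
    (hM : (1 - Mᵀ * M).PosSemidef) :
    ∃ O : Matrix n n ℝ, Oᵀ * O = 1 ∧ trace (Mᵀ * M) ≤ trace (Oᵀ * M) := by
  obtain ⟨U, W, σ, hU, hW, hσ, rfl⟩ := M.exists_eq_mul_diagonal_mul_transpose
  have hcancel : ∀ X : Matrix n n ℝ, Uᵀ * (U * X) = X := fun X => by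
    rw [← Matrix.mul_assoc, hU, Matrix.one_mul]
  have hMM : (U * diagonal σ * Wᵀ)ᵀ * (U * diagonal σ * Wᵀ) =
      W * diagonal (fun i => σ i * σ i) * Wᵀ := by
    simp only [transpose_mul, transpose_transpose, diagonal_transpose, Matrix.mul_assoc, hcancel]
    rw [← Matrix.mul_assoc (diagonal σ), diagonal_mul_diagonal]
  have hσ1 : ∀ i, σ i * σ i ≤ 1 := by
    have hconj : Wᵀ * (1 - W * diagonal (fun i => σ i * σ i) * Wᵀ) * W =
        1 - diagonal (fun i => σ i * σ i) := by
      simp only [Matrix.mul_sub, Matrix.sub_mul, Matrix.mul_one, Matrix.mul_assoc, hW]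
      rw [← Matrix.mul_assoc, hW, Matrix.one_mul]
    intro i
    have hdiag := (hM.conjTranspose_mul_mul_same W).diag_nonneg (i := i)
    rw [hMM, conjTranspose_eq_transpose_of_trivial, hconj] at hdiag
    simpa using hdiag
  refine ⟨U * Wᵀ, ?_, ?_⟩
  · simp only [transpose_mul, transpose_transpose, Matrix.mul_assoc, hcancel]
    exact mul_eq_one_comm.mp hW
  · rw [hMM, trace_mul_mul_transpose_of_transpose_mul_eq_one hW]
    simp only [transpose_mul, transpose_transpose, Matrix.mul_assoc, hcancel]
    rw [← Matrix.mul_assoc, trace_mul_mul_transpose_of_transpose_mul_eq_one hW, trace_diagonal,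
      trace_diagonal]
    exact Finset.sum_le_sum fun i _ => by nlinarith [hσ i, hσ1 i]

section OrthonormalColumns

variable {V Vh : Matrix m n ℝ} (hV : Vᵀ * V = 1) (hVh : Vhᵀ * Vh = 1)
include hV hVh

theorem one_sub_transpose_mul_self_eq :
    1 - (Vhᵀ * V)ᵀ * (Vhᵀ * V) = (V - Vh * (Vhᵀ * V))ᵀ * (V - Vh * (Vhᵀ * V)) := by
  have hcancel : ∀ X : Matrix n n ℝ, Vhᵀ * (Vh * X) = X := fun X => by
    rw [← Matrix.mul_assoc, hVh, Matrix.one_mul]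
  simp only [transpose_sub, transpose_mul, transpose_transpose, Matrix.sub_mul, Matrix.mul_sub,
    Matrix.mul_assoc, hcancel, hV]
  abel

theorem trace_transpose_mul_self_mul_sub {O : Matrix n n ℝ} (hO : Oᵀ * O = 1) :
    trace ((Vh * O - V)ᵀ * (Vh * O - V)) = 2 * Fintype.card n - 2 * trace (Oᵀ * (Vhᵀ * V)) := by
  have hcancel : Oᵀ * (Vhᵀ * (Vh * O)) = 1 := by
    rw [← Matrix.mul_assoc Vhᵀ, hVh, Matrix.one_mul, hO]
  have hswap : trace (Vᵀ * (Vh * O)) = trace (Oᵀ * (Vhᵀ * V)) := by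
    rw [← trace_transpose]
    simp [Matrix.mul_assoc]
  simp only [transpose_sub, transpose_mul, Matrix.sub_mul, Matrix.mul_sub, Matrix.mul_assoc,
    hcancel, hV, trace_sub, hswap, trace_one]
  ring

end OrthonormalColumns

theorem stmt13 (p d : ℕ) (V Vh : Matrix (Fin p) (Fin d) ℝ)
    (hV : Vᵀ * V = 1) (hVh : Vhᵀ * Vh = 1) :
    ∃ O : Matrix (Fin d) (Fin d) ℝ, Oᵀ * O = 1 ∧
      (frobNorm (Vh * O - V)) ^ 2 ≤ 2 * ((d : ℝ) - (frobNorm (Vhᵀ * V)) ^ 2) := by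
  have hpsd : (1 - (Vhᵀ * V)ᵀ * (Vhᵀ * V)).PosSemidef := by
    rw [one_sub_transpose_mul_self_eq hV hVh]
    simpa using posSemidef_conjTranspose_mul_self (V - Vh * (Vhᵀ * V))
  obtain ⟨O, hO, htrace⟩ := exists_orthogonal_trace_transpose_mul_self_le _ hpsd
  refine ⟨O, hO, ?_⟩
  rw [frobNorm_sq_s13, frobNorm_sq_s13, trace_transpose_mul_self_mul_sub hV hVh hO, Fintype.card_fin]
  linarith
end
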